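/- The formal power series f_4(x) = (∑_{n≥0} C(2n,n)^2 x^n)^2 satisfies, as an identity of formal power series in z, the functional equation (1+4z)^{-2} · f_4(z/(1+4z)^2) = f_4(z^2). -/

import Mathlib

/-!
Write `P(x) = ∑ C(2n,n)² xⁿ`, so that `f₄ = P²`. Substitution is a ring homomorphism, so it
suffices to prove `(1+4z)⁻¹ P(z/(1+4z)²) = P(z²)`. Expanding `(1+4z)^{-(2k+1)}` binomially,
the `n`-th coefficient of the left side is `aₙ = ∑ₖ C(2k,k)² C(n+k,2k) (-4)^(n-k)`.
A WZ pair shows `(n+2)² a_{n+2} = 16 (n+1)² aₙ`, the recurrence satisfied by the coefficients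
of `P(z²)` as well, and both sequences start with `1, 0`.
-/

open PowerSeries

/-- Formal composition `f ∘ g` of power series, valid when `g` has zero constant term:
the `n`-th coefficient is `∑_{k=0}^{n} f_k · [z^n] g^k`. -/
noncomputable def psComp (f g : PowerSeries ℚ) : PowerSeries ℚ :=
  PowerSeries.mk fun n =>
    ∑ k ∈ Finset.range (n + 1), (PowerSeries.coeff k f) * PowerSeries.coeff n (g ^ k)

noncomputable def f4 : PowerSeries ℚ :=
  (PowerSeries.mk fun n => ((2 * n).choose n : ℚ) ^ 2) ^ 2

open Finset Nat

namespace PowerSeries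

variable {R : Type*} [CommRing R]

theorem coeff_pow_eq_zero_of_lt {g : R⟦X⟧} (hg : constantCoeff g = 0) {n k : ℕ} (h : n < k) :
    coeff n (g ^ k) = 0 :=
  coeff_of_lt_order _ <|
    (Nat.cast_lt.mpr h).trans_le (le_order_pow_of_constantCoeff_eq_zero k hg)

theorem coeff_subst_eq_sum_range {f g : R⟦X⟧} (hg : constantCoeff g = 0) {n N : ℕ}
    (hn : n ≤ N) : coeff n (f.subst g) = ∑ k ∈ range (N + 1), coeff k f * coeff n (g ^ k) := by
  rw [coeff_subst' (.of_constantCoeff_zero' hg)]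
  refine finsum_eq_sum_of_support_subset _ fun k hk => ?_
  by_contra hkN
  rw [coe_range, Set.mem_Iio, not_lt] at hkN
  exact hk (by simp [coeff_pow_eq_zero_of_lt hg (show n < k by omega)])

theorem coeff_mul_subst {f g : R⟦X⟧} (h : R⟦X⟧) (hg : constantCoeff g = 0) (n : ℕ) :
    coeff n (h * f.subst g) = ∑ k ∈ range (n + 1), coeff k f * coeff n (h * g ^ k) := by
  simp only [coeff_mul, mul_sum]
  rw [sum_comm]
  refine sum_congr rfl fun p hp => ?_
  rw [coeff_subst_eq_sum_range hg (Finset.HasAntidiagonal.antidiagonal.snd_le hp), mul_sum]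
  exact sum_congr rfl fun k _ => by ring

theorem inv_one_sub_C_mul_X_pow {k : Type*} [Field k] (a : k) (j : ℕ) :
    (1 - C a * X)⁻¹ ^ (j + 1) = rescale a (mk fun m => ((j + m).choose j : k)) := by
  have hunit : constantCoeff (1 - C a * X) ≠ 0 := by simp
  have hne : (1 - C a * X) ^ (j + 1) ≠ 0 := pow_ne_zero _ fun h => hunit (by simp [h])
  refine mul_right_cancel₀ hne ?_
  rw [← mul_pow, PowerSeries.inv_mul_cancel _ hunit, one_pow, ← rescale_X,
    ← map_one (rescale a), ← map_sub, ← map_pow, ← map_mul,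
    mk_add_choose_mul_one_sub_pow_eq_one, map_one]

end PowerSeries

theorem psComp_eq_subst (f : PowerSeries ℚ) {g : PowerSeries ℚ} (hg : constantCoeff g = 0) :
    psComp f g = f.subst g := by
  ext n
  rw [psComp, coeff_mk, coeff_subst_eq_sum_range hg le_rfl]

section ChooseCasts

variable {R : Type*} [CommRing R] (m j : ℕ)

theorem Nat.cast_choose_succ_right_eq :
    (m.choose (j + 1) : R) * (j + 1) = m.choose j * (m - j) := by
  rcases le_or_gt j m with h | h
  · exact_mod_cast congrArg (Nat.cast : ℕ → R) (choose_succ_right_eq m j) |>.trans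
      (by push_cast [Nat.cast_sub h]; ring)
  · simp [choose_eq_zero_of_lt h, choose_eq_zero_of_lt (h.trans (lt_add_one j))]

theorem Nat.cast_choose_add_two_right_eq :
    (m.choose (j + 2) : R) * ((j + 1) * (j + 2)) = m.choose j * ((m - j) * (m - j - 1)) := by
  have h0 := cast_choose_succ_right_eq (R := R) m j
  have h1 := cast_choose_succ_right_eq (R := R) m (j + 1)
  push_cast at h1
  linear_combination (j + 1 : R) * h1 + (m - j - 1 : R) * h0

theorem Nat.cast_succ_choose_add_two_eq :
    ((m + 1).choose (j + 2) : R) * ((j + 1) * (j + 2)) = m.choose j * ((m + 1) * (m - j)) := by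
  have h0 := cast_choose_succ_right_eq (R := R) m j
  have h1 := congrArg (Nat.cast : ℕ → R) (add_one_mul_choose_eq m (j + 1))
  push_cast at h1
  linear_combination (-(j + 1) : R) * h1 + (m + 1 : R) * h0

theorem Nat.cast_add_two_choose_add_two_eq :
    ((m + 2).choose (j + 2) : R) * ((j + 1) * (j + 2)) = m.choose j * ((m + 1) * (m + 2)) := by
  have h0 := congrArg (Nat.cast : ℕ → R) (add_one_mul_choose_eq m j)
  have h1 := congrArg (Nat.cast : ℕ → R) (add_one_mul_choose_eq (m + 1) (j + 1))
  push_cast at h0 h1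
  linear_combination (-(j + 1) : R) * h1 - (m + 2 : R) * h0

end ChooseCasts

noncomputable def binomSumTerm (n k : ℕ) : ℚ :=
  (centralBinom k : ℚ) ^ 2 * (n + k).choose (2 * k) / (-4) ^ k

/-- The WZ certificate of `binomSumTerm`, as produced by Zeilberger's algorithm. -/
noncomputable def binomSumCert (n k : ℕ) : ℚ :=
  (2 * n + 3) * (2 * k + 1) * (centralBinom k : ℚ) ^ 2 * (n + k + 1).choose (2 * k) / (-4) ^ k

theorem binomSumTerm_wz (n k : ℕ) :
    ((n : ℚ) + 1) ^ 2 * binomSumTerm n (k + 1) - ((n : ℚ) + 2) ^ 2 * binomSumTerm (n + 2) (k + 1)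
      = binomSumCert n k - binomSumCert n (k + 1) := by
  have hk : (k : ℚ) + 1 ≠ 0 := by positivity
  have hD : (((2 * k : ℕ) : ℚ) + 1) * ((2 * k : ℕ) + 2) ≠ 0 := by positivity
  have hcb : (centralBinom (k + 1) : ℚ) = 2 * (2 * k + 1) * centralBinom k / (k + 1) := by
    rw [eq_div_iff hk]
    exact_mod_cast (mul_comm _ _).trans (succ_mul_centralBinom_succ k)
  -- every binomial coefficient in sight is a rational multiple of `C(n+k+1, 2k)`
  have h0 := cast_choose_add_two_right_eq (R := ℚ) (n + k + 1) (2 * k)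
  have h1 := cast_succ_choose_add_two_eq (R := ℚ) (n + k + 1) (2 * k)
  have h2 := cast_add_two_choose_add_two_eq (R := ℚ) (n + k + 1) (2 * k)
  rw [← eq_div_iff hD] at h0 h1 h2
  simp only [binomSumTerm, binomSumCert]
  rw [show n + (k + 1) = n + k + 1 by ring, show n + 2 + (k + 1) = n + k + 1 + 2 by ring,
    show 2 * (k + 1) = 2 * k + 2 by ring, h0, h1, h2, hcb]
  push_cast
  field_simp
  ring

theorem binomSumTerm_zero_right (n : ℕ) : binomSumTerm n 0 = 1 := by
  simp [binomSumTerm]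

theorem binomSumCert_zero_right (n : ℕ) : binomSumCert n 0 = 2 * n + 3 := by
  simp [binomSumCert]

theorem binomSumTerm_eq_zero {n k : ℕ} (h : n < k) : binomSumTerm n k = 0 := by
  simp [binomSumTerm, choose_eq_zero_of_lt (show n + k < 2 * k by omega)]

theorem binomSumCert_eq_zero {n k : ℕ} (h : n + 1 < k) : binomSumCert n k = 0 := by
  simp [binomSumCert, choose_eq_zero_of_lt (show n + k + 1 < 2 * k by omega)]

noncomputable def binomSum (n : ℕ) : ℚ := ∑ k ∈ range (n + 1), binomSumTerm n k

theorem binomSum_eq_sum_range {n N : ℕ} (h : n < N) :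
    binomSum n = ∑ k ∈ range N, binomSumTerm n k :=
  sum_subset (range_subset_range.mpr h) fun k _ hk =>
    binomSumTerm_eq_zero (by rw [mem_range, not_lt] at hk; omega)

theorem binomSum_rec (n : ℕ) :
    ((n : ℚ) + 2) ^ 2 * binomSum (n + 2) = ((n : ℚ) + 1) ^ 2 * binomSum n := by
  have htel : ∑ k ∈ range (n + 3),
      (((n : ℚ) + 1) ^ 2 * binomSumTerm n k - ((n : ℚ) + 2) ^ 2 * binomSumTerm (n + 2) k) = 0 := by
    rw [sum_range_succ', sum_congr rfl fun k _ => binomSumTerm_wz n k, sum_range_sub',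
      binomSumCert_eq_zero (k := n + 2) (by omega), binomSumTerm_zero_right,
      binomSumTerm_zero_right, binomSumCert_zero_right]
    ring
  rw [sum_sub_distrib, ← mul_sum, ← mul_sum, ← binomSum_eq_sum_range (by omega),
    ← binomSum_eq_sum_range (by omega)] at htel
  linarith

theorem eq_of_two_step_recurrence {M : Type*} [MonoidWithZero M] [IsLeftCancelMulZero M]
    {a b : ℕ → M} (p q : ℕ → M) (hp : ∀ n, p n ≠ 0) (ha : ∀ n, p n * a (n + 2) = q n * a n)
    (hb : ∀ n, p n * b (n + 2) = q n * b n) (h0 : a 0 = b 0) (h1 : a 1 = b 1) : a = b := by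
  funext n
  induction n using Nat.twoStepInduction with
  | zero => exact h0
  | one => exact h1
  | more n ih _ => exact mul_left_cancel₀ (hp n) (by rw [ha, hb, ih])

theorem centralBinom_half_sq_rec (n : ℕ) :
    ((n : ℚ) + 2) ^ 2 * (if 2 ∣ n + 2 then (centralBinom ((n + 2) / 2) : ℚ) ^ 2 else 0)
      = 16 * ((n : ℚ) + 1) ^ 2 * (if 2 ∣ n then (centralBinom (n / 2) : ℚ) ^ 2 else 0) := by
  obtain ⟨m, rfl | rfl⟩ := even_or_odd' n
  · have h := congrArg (Nat.cast : ℕ → ℚ) (succ_mul_centralBinom_succ m)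
    push_cast at h
    simp only [show 2 ∣ 2 * m + 2 by omega, dvd_mul_right, if_true,
      show (2 * m + 2) / 2 = m + 1 by omega, show 2 * m / 2 = m by omega]
    push_cast
    linear_combination
      (4 * ((m : ℚ) + 1) * centralBinom (m + 1) + 8 * (2 * m + 1) * centralBinom m) * h
  · simp [show ¬ 2 ∣ 2 * m + 1 by omega, show ¬ 2 ∣ 2 * m + 1 + 2 by omega]

section KeyIdentity

local notation "P" => (mk fun n => (centralBinom n : ℚ) ^ 2 : ℚ⟦X⟧)
local notation "u" => (1 + 4 * X : ℚ⟦X⟧)⁻¹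

theorem coeff_inv_mul_subst (n : ℕ) :
    coeff n (u * subst (X * u ^ 2) P) = (-4) ^ n * binomSum n := by
  have hu : (1 + 4 * X : ℚ⟦X⟧) = 1 - C (-4) * X := by simp [map_ofNat]
  rw [coeff_mul_subst _ (by simp), binomSum, mul_sum]
  refine sum_congr rfl fun k hk => ?_
  have hkn : k ≤ n := Nat.lt_succ_iff.mp (mem_range.mp hk)
  rw [show u * (X * u ^ 2) ^ k = X ^ k * u ^ (2 * k + 1) by ring, coeff_X_pow_mul', if_pos hkn,
    hu, inv_one_sub_C_mul_X_pow, coeff_rescale, coeff_mk, coeff_mk, binomSumTerm,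
    show 2 * k + (n - k) = n + k by omega, pow_sub₀ _ (by norm_num) hkn]
  ring

theorem inv_mul_subst_eq_subst_X_sq : u * subst (X * u ^ 2) P = subst (X ^ 2) P := by
  have hcoeff := eq_of_two_step_recurrence
    (fun n => ((n : ℚ) + 2) ^ 2) (fun n => 16 * ((n : ℚ) + 1) ^ 2) (fun n => by positivity)
    (a := fun n => (-4) ^ n * binomSum n)
    (b := fun n => if 2 ∣ n then (centralBinom (n / 2) : ℚ) ^ 2 else 0)
    (fun n => by linear_combination 16 * (-4 : ℚ) ^ n * binomSum_rec n) centralBinom_half_sq_rec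
    (by simp [binomSum, binomSumTerm_zero_right])
    (by norm_num [binomSum, binomSumTerm, sum_range_succ, centralBinom, choose_two_right])
  ext n
  rw [coeff_inv_mul_subst, coeff_subst_X_pow two_ne_zero, coeff_mk]
  exact congrFun hcoeff n

end KeyIdentity

theorem functional_equation_f4 :
    ((1 + 4 * X : PowerSeries ℚ)⁻¹) ^ 2 * psComp f4 (X * ((1 + 4 * X)⁻¹) ^ 2)
      = psComp f4 (X ^ 2) := by
  have hw : constantCoeff (X * ((1 + 4 * X : ℚ⟦X⟧)⁻¹) ^ 2) = 0 := by simp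
  have hX2 : constantCoeff (X ^ 2 : ℚ⟦X⟧) = 0 := by simp
  have hf4 : f4 = (mk fun n => (centralBinom n : ℚ) ^ 2) ^ 2 := by
    simp [f4, centralBinom_eq_two_mul_choose]
  rw [psComp_eq_subst _ hw, psComp_eq_subst _ hX2, hf4, subst_pow (.of_constantCoeff_zero' hw),
    subst_pow (.of_constantCoeff_zero' hX2), ← inv_mul_subst_eq_subst_X_sq, mul_pow]
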